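/- For every integer K ≥ 3, there exist functions δ̂_K : (2, K) → ℝ and ε̂_K : (2, K) → ℝ, both positive and continuous, such that δ̂_K(c) < β_K for all c ∈ (2, K), and J_K(α, (1 − δ̂_K(c), δ̂_K(c)); c) ≤ −ε̂_K(c) for all c ∈ (2, K) and all α ∈ [1 − δ̂_K(c), 1]. -/

import Mathlib

/-- `Q(z) = z(e^z − 1)/(e^z − 1 − z)`. -/
noncomputable def Qfun (z : ℝ) : ℝ := z * (Real.exp z - 1) / (Real.exp z - 1 - z)

/-- `exp₂(z) = e^z − 1 − z`. -/
noncomputable def exp2 (z : ℝ) : ℝ := Real.exp z - 1 - z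

/-- Entropy `H(α) = −α ln α − (1−α) ln(1−α)` (with `0 · ln 0 = 0`,
automatic since `Real.log 0 = 0`). -/
noncomputable def Hent (a : ℝ) : ℝ := -(a * Real.log a) - (1 - a) * Real.log (1 - a)

/-- `J_K(α, (ζ₁,ζ₂); c)`, with `lam` the unique positive solution of `Q(lam) = c`
passed as an explicit parameter. -/
noncomputable def JK (K : ℕ) (a z1 z2 c lam : ℝ) : ℝ :=
  (1 / (K : ℝ)) * Hent a + a * Real.log (a / z1) + (1 - a) * Real.log ((1 - a) / z2)
    + (1 / c) * Real.log
        ((exp2 (lam * (z2 + z1)) + exp2 (lam * (z2 - z1))) / (2 * exp2 lam))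

/-- `L_K(α, c) = c · J_K(α, ζ_lin(α); c)` where `ζ_lin(α) = (α, 1−α)`. -/
noncomputable def LK (K : ℕ) (a c lam : ℝ) : ℝ := c * JK K a a (1 - a) c lam

/-- `β_K = exp(−(1/K + ln √(K−1) − 1 + K/(2(K−1)))/(1/2 − 1/K))`. -/
noncomputable def betaK (K : ℕ) : ℝ :=
  Real.exp (-(1 / (K : ℝ) + Real.log (Real.sqrt ((K : ℝ) - 1)) - 1
      + (K : ℝ) / (2 * ((K : ℝ) - 1))) / (1 / 2 - 1 / (K : ℝ)))

lemma cubic_le_exp {x : ℝ} (hx : 0 ≤ x) : 1 + x + x^2/2 + x^3/6 ≤ Real.exp x := by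
  have h := Real.sum_le_exp_of_nonneg hx 4
  have : ∑ i ∈ Finset.range 4, x ^ i / (Nat.factorial i) = 1 + x + x^2/2 + x^3/6 := by
    simp [Finset.sum_range_succ, Nat.factorial]
    try ring
  linarith [this ▸ h]

lemma exp_neg_le_quad {x : ℝ} (hx : 0 ≤ x) : Real.exp (-x) ≤ 1 - x + x^2/2 := by
  have hc := cubic_le_exp hx
  have hqpos : (0:ℝ) < 1 - x + x^2/2 := by nlinarith [sq_nonneg (x - 1)]
  rw [Real.exp_neg]
  rw [inv_le_iff_one_le_mul₀ (Real.exp_pos x)]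
  nlinarith [mul_le_mul_of_nonneg_left hc hqpos.le, pow_nonneg hx 3, pow_nonneg hx 4, pow_nonneg hx 5]

lemma sinh_bound {x : ℝ} (hx : 0 ≤ x) : x^3/6 ≤ Real.exp x - Real.exp (-x) - 2*x := by
  have h1 := cubic_le_exp hx
  have h2 := exp_neg_le_quad hx
  linarith

lemma exp2_nonneg (x : ℝ) : 0 ≤ exp2 x := by
  have := Real.add_one_le_exp x
  unfold exp2; linarith

lemma exp2_pos {x : ℝ} (hx : x ≠ 0) : 0 < exp2 x := by
  have := Real.add_one_lt_exp hx
  unfold exp2; linarith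

lemma exp2_mono_neg {u v : ℝ} (hv : v ≤ u) (hu : u ≤ 0) : exp2 u ≤ exp2 v := by
  unfold exp2
  have h1 : Real.exp u * Real.exp (v - u) = Real.exp v := by
    rw [← Real.exp_add]; ring_nf
  have h2 : (v - u) + 1 ≤ Real.exp (v - u) := Real.add_one_le_exp _
  have h3 : Real.exp u ≤ 1 := Real.exp_le_one_iff.mpr hu
  have h4 : (0:ℝ) < Real.exp u := Real.exp_pos u
  nlinarith [mul_le_mul_of_nonneg_left h2 h4.le,
    mul_le_mul_of_nonneg_right h3 (sub_nonneg.mpr hv)]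

lemma neg_log_le {x d : ℝ} (hx : 1 - d ≤ x) (hx1 : x ≤ 1) (hd4 : d ≤ 1/4) :
    -Real.log x ≤ 2*d := by
  have hx0 : (0:ℝ) < x := by linarith
  have h := Real.log_le_sub_one_of_pos (inv_pos.mpr hx0)
  rw [Real.log_inv] at h
  have h2 : x⁻¹ ≤ 1 + 2*d := by
    rw [inv_eq_one_div, div_le_iff₀ hx0]
    nlinarith
  linarith

lemma neg_mul_log_le {t : ℝ} (ht : 0 ≤ t) : -(t * Real.log t) ≤ 2 * Real.sqrt t := by
  rcases eq_or_lt_of_le ht with h | h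
  · simp [← h]
  · have hs : 0 < Real.sqrt t := Real.sqrt_pos.mpr h
    have hls := Real.log_sqrt ht
    have h2 := Real.log_le_sub_one_of_pos (inv_pos.mpr hs)
    rw [Real.log_inv] at h2
    have h3 : t * (Real.sqrt t)⁻¹ = Real.sqrt t := by
      rw [← div_eq_mul_inv]; exact Real.div_sqrt
    have h4 : t * (-Real.log (Real.sqrt t)) ≤ t * ((Real.sqrt t)⁻¹ - 1) :=
      mul_le_mul_of_nonneg_left h2 ht
    have h5 : Real.log t = 2 * Real.log (Real.sqrt t) := by rw [hls]; ring
    nlinarith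

set_option maxHeartbeats 2000000 in
theorem stmt15 (K : ℕ) (hK : 3 ≤ K) :
    ∃ δ ε : ℝ → ℝ,
      ContinuousOn δ (Set.Ioo 2 (K : ℝ)) ∧ ContinuousOn ε (Set.Ioo 2 (K : ℝ)) ∧
      (∀ c ∈ Set.Ioo (2:ℝ) (K : ℝ), 0 < δ c ∧ 0 < ε c ∧ δ c < betaK K) ∧
      (∀ c ∈ Set.Ioo (2:ℝ) (K : ℝ), ∀ lam : ℝ, 0 < lam → Qfun lam = c →
        ∀ a ∈ Set.Icc (1 - δ c) (1:ℝ),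
          JK K a (1 - δ c) (δ c) c lam ≤ -ε c) := by
  have hKR : (3:ℝ) ≤ (K:ℝ) := by exact_mod_cast hK
  have hβpos : 0 < betaK K := Real.exp_pos _
  set ε : ℝ → ℝ := fun c => (c - 2)^3 * Real.exp (-c) / (24 * c) with hεdef
  set m : ℝ := min (betaK K) (1/2) / 2 with hmdef
  set δ : ℝ → ℝ := fun c => min m ((ε c / 6)^2) with hδdef
  have hmpos : 0 < m := by
    rw [hmdef]
    have := lt_min hβpos (by norm_num : (0:ℝ) < 1/2)
    linarith
  have hm4 : m ≤ 1/4 := by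
    rw [hmdef]
    have := min_le_right (betaK K) (1/2)
    linarith
  have hmβ : m < betaK K := by
    rw [hmdef]
    have := min_le_left (betaK K) (1/2)
    linarith
  have hεcont : ContinuousOn ε (Set.Ioo 2 (K:ℝ)) := by
    apply ContinuousOn.div
    · exact (((continuous_id.sub continuous_const).pow 3).mul
        (Real.continuous_exp.comp continuous_neg)).continuousOn
    · exact (continuous_const.mul continuous_id).continuousOn
    · intro x hx
      have hx2 := hx.1
      exact ne_of_gt (by linarith : (0:ℝ) < 24 * x)
  have hδcont : ContinuousOn δ (Set.Ioo 2 (K:ℝ)) :=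
    ContinuousOn.inf continuousOn_const ((hεcont.div_const 6).pow 2)
  have hεpos : ∀ c ∈ Set.Ioo (2:ℝ) (K:ℝ), 0 < ε c := by
    intro c hc
    have hc2 := hc.1
    have h1 : (0:ℝ) < c - 2 := by linarith
    exact div_pos (mul_pos (pow_pos h1 3) (Real.exp_pos _)) (by linarith)
  have hδpos : ∀ c ∈ Set.Ioo (2:ℝ) (K:ℝ), 0 < δ c := by
    intro c hc
    exact lt_min hmpos (pow_pos (div_pos (hεpos c hc) (by norm_num)) 2)
  refine ⟨δ, ε, hδcont, hεcont, ?_, ?_⟩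
  · intro c hc
    exact ⟨hδpos c hc, hεpos c hc, lt_of_le_of_lt (min_le_left _ _) hmβ⟩
  · intro c hc lam hlam hQ a ha
    obtain ⟨hc2, hcK⟩ := hc
    obtain ⟨ha1, ha2⟩ := ha
    have hεc : 0 < ε c := hεpos c ⟨hc2, hcK⟩
    set d : ℝ := δ c with hddef
    have hd0 : 0 < d := hδpos c ⟨hc2, hcK⟩
    have hd4 : d ≤ 1/4 := le_trans (min_le_left _ _) hm4
    have hdε : d ≤ (ε c / 6)^2 := min_le_right _ _
    clear_value d
    clear hddef hδpos hδcont hδdef δ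
    have hsqrtd : Real.sqrt d ≤ ε c / 6 := by
      have := Real.sqrt_le_sqrt hdε
      rwa [Real.sqrt_sq (by positivity : (0:ℝ) ≤ ε c / 6)] at this
    have hsq0 : 0 ≤ Real.sqrt d := Real.sqrt_nonneg d
    have hdsq : d ≤ Real.sqrt d := by
      nlinarith [Real.sq_sqrt hd0.le]
    -- facts about lam and E
    set E : ℝ := exp2 lam with hEdef
    have hE : 0 < E := exp2_pos (ne_of_gt hlam)
    have hEexp : E ≤ Real.exp lam := by
      rw [hEdef]; unfold exp2; linarith
    rw [Qfun, div_eq_iff (by rw [hEdef] at hE; unfold exp2 at hE; linarith)] at hQ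
    have hEc : (c - lam) * E = lam^2 := by
      rw [hEdef]; unfold exp2; linear_combination -hQ
    have hE2 : lam^2/2 ≤ E := by
      rw [hEdef]; unfold exp2
      nlinarith [cubic_le_exp hlam.le, pow_nonneg hlam.le 3]
    have hlamc : lam < c := by nlinarith [sq_nonneg lam]
    have hlamc2 : c - 2 ≤ lam := by nlinarith
    have hEec : E ≤ Real.exp c := le_trans hEexp (Real.exp_le_exp.mpr hlamc.le)
    -- entropy term
    have hloga : -Real.log a ≤ 2*d := neg_log_le ha1 ha2 hd4
    have ha0 : (0:ℝ) < a := by linarith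
    have hlogt : -((1-a) * Real.log (1-a)) ≤ 2 * Real.sqrt d := by
      have h1 : -((1-a) * Real.log (1-a)) ≤ 2 * Real.sqrt (1-a) :=
        neg_mul_log_le (by linarith)
      have h2 : Real.sqrt (1-a) ≤ Real.sqrt d := Real.sqrt_le_sqrt (by linarith)
      linarith
    have hHent : Hent a ≤ 4 * Real.sqrt d := by
      have h1 : -(a * Real.log a) ≤ 2*d := by
        have h := mul_le_mul_of_nonneg_left hloga ha0.le
        calc -(a * Real.log a) = a * -Real.log a := by ring
          _ ≤ a * (2*d) := h
          _ ≤ 1 * (2*d) := mul_le_mul_of_nonneg_right ha2 (by linarith)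
          _ = 2*d := by ring
      unfold Hent
      linarith
    have hT1 : (1 / (K:ℝ)) * Hent a ≤ 4 * Real.sqrt d := by
      have hK1 : (0:ℝ) < 1/(K:ℝ) := by positivity
      have hK2 : 1/(K:ℝ) ≤ 1 := by
        rw [div_le_one (by linarith : (0:ℝ) < (K:ℝ))]; linarith
      nlinarith [hHent]
    -- second term
    have hT2 : a * Real.log (a / (1 - d)) ≤ 2 * Real.sqrt d := by
      have h1d : (0:ℝ) < 1 - d := by linarith
      have hlog : Real.log (a / (1-d)) ≤ 2*d := by
        rw [Real.log_div (ne_of_gt ha0) (ne_of_gt h1d)]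
        have h1 : Real.log a ≤ 0 := Real.log_nonpos ha0.le ha2
        have h2 : -Real.log (1-d) ≤ 2*d := neg_log_le (by linarith) (by linarith) hd4
        linarith
      nlinarith [hlog]
    -- third term
    have hT3 : (1 - a) * Real.log ((1 - a) / d) ≤ 0 := by
      apply mul_nonpos_of_nonneg_of_nonpos (by linarith)
      apply Real.log_nonpos
      · exact div_nonneg (by linarith) hd0.le
      · rw [div_le_one hd0]; linarith
    -- fourth term
    have hT4 : (1/c) * Real.log ((exp2 (lam * (d + (1 - d))) + exp2 (lam * (d - (1 - d)))) / (2 * E))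
        ≤ -(2 * ε c) := by
      have e1 : lam * (d + (1 - d)) = lam := by ring
      have e2 : lam * (d - (1 - d)) = lam * (2*d - 1) := by ring
      rw [e1, e2, ← hEdef]
      set N : ℝ := E + exp2 (lam * (2*d - 1)) with hNdef
      have hmono : exp2 (lam * (2*d - 1)) ≤ exp2 (-lam) := by
        apply exp2_mono_neg
        · nlinarith
        · nlinarith
      have hr2 : exp2 (-lam) ≤ E - lam^3/6 := by
        rw [hEdef]; unfold exp2
        have := sinh_bound hlam.le
        linarith
      have hN2E : N ≤ 2*E - lam^3/6 := by rw [hNdef]; linarith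
      have hNpos : 0 < N := by
        rw [hNdef]
        have := exp2_nonneg (lam * (2*d - 1))
        linarith
      have hlog := Real.log_le_sub_one_of_pos (show (0:ℝ) < N / (2*E) by positivity)
      have hfrac : N / (2*E) - 1 ≤ -(lam^3 / (12*E)) := by
        rw [div_sub_one (by positivity : (2*E) ≠ 0)]
        rw [div_le_iff₀ (by positivity : (0:ℝ) < 2*E)]
        have : -(lam^3 / (12*E)) * (2*E) = -(lam^3/6) := by
          field_simp
          ring
        rw [this]
        linarith
      have hlam3 : (c-2)^3 ≤ lam^3 := by
        apply pow_le_pow_left₀ (by linarith) hlamc2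
      have hdenom : lam^3 / (12*E) ≥ (c-2)^3 / (12 * Real.exp c) := by
        apply div_le_div₀ (by positivity) hlam3 (by positivity)
        linarith
      have hεeq : 2 * c * ε c = (c-2)^3 / (12 * Real.exp c) := by
        rw [hεdef]
        simp only
        rw [Real.exp_neg]
        have h24 : (24:ℝ) * c ≠ 0 := by positivity
        field_simp
        ring
      have hlogN : Real.log (N / (2*E)) ≤ -(2 * c * ε c) := by
        rw [hεeq]
        linarith
      have hc0 : (0:ℝ) < c := by linarith
      calc (1/c) * Real.log (N / (2*E)) ≤ (1/c) * (-(2 * c * ε c)) := by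
            apply mul_le_mul_of_nonneg_left hlogN (by positivity)
        _ = -(2 * ε c) := by field_simp
    -- assemble
    have hJ : JK K a (1 - d) d c lam =
        (1 / (K:ℝ)) * Hent a + a * Real.log (a / (1 - d)) + (1 - a) * Real.log ((1 - a) / d)
          + (1/c) * Real.log ((exp2 (lam * (d + (1 - d))) + exp2 (lam * (d - (1 - d)))) / (2 * E)) := by
      rw [JK, hEdef]
    rw [hJ]
    linarith
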